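/- arXiv:1704.07338 — 4 statements merged into one kernel-verified Lean document; each statement's English description precedes it below -/
import Mathlib

section
/- [Asymptotically vanishing variations, averaged case] For k = 1, 2, … let α_k ∈ (0,1), let G_k : E → E be nonexpansive, define T_k(x) = (1−α_k)·x + α_k·G_k(x), and assume: (i) there is X ≥ 0 with ‖T_k(x)‖ ≤ X for all k and all x ∈ E; (ii) there exist points x*_k with G_k(x*_k) = x*_k and nonnegative reals δ_k with ‖x*_{k+1} − x*_k‖ ≤ δ_k and Σ_{k=1}^{∞} δ_k < ∞; (iii) there is a > 0 with α_k(1−α_k) ≥ a for all k. Define x_{k+1} = T_k(x_k) from x₁ ∈ E. Then the fixed-point residual converges strongly to zero: ‖G_k(x_k) − x_k‖ → 0 as k → ∞. -/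
open Filter Finset

lemma avg_norm_sq_identity {E : Type*} [NormedAddCommGroup E] [InnerProductSpace ℝ E]
    (c : ℝ) (u v : E) :
    ‖(1 - c) • u + c • v‖ ^ 2
      = (1 - c) * ‖u‖ ^ 2 + c * ‖v‖ ^ 2 - c * (1 - c) * ‖u - v‖ ^ 2 := by
  have h1 := norm_add_sq_real ((1 - c) • u) (c • v)
  have h2 := norm_sub_sq_real u v
  simp only [norm_smul, inner_smul_left, inner_smul_right, Real.norm_eq_abs,
    mul_pow, sq_abs, starRingEnd_apply, star_trivial] at h1
  rw [h1, h2]; ring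

/-- Asymptotically vanishing variations, averaged case. -/
theorem running_mann_krasnoselskii_vanishing_averaged
    {E : Type*} [NormedAddCommGroup E] [InnerProductSpace ℝ E] [CompleteSpace E]
    (α : ℕ → ℝ) (hα : ∀ k, α k ∈ Set.Ioo (0:ℝ) 1)
    (G : ℕ → E → E) (hG : ∀ k x y, ‖G k x - G k y‖ ≤ ‖x - y‖)
    (T : ℕ → E → E) (hT : ∀ k x, T k x = (1 - α k) • x + α k • G k x)
    (X : ℝ) (hX : 0 ≤ X) (hbound : ∀ k x, ‖T k x‖ ≤ X)
    (xs : ℕ → E) (hfix : ∀ k, G k (xs k) = xs k)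
    (δ : ℕ → ℝ) (hδ : ∀ k, 0 ≤ δ k)
    (hdrift : ∀ k, ‖xs (k + 1) - xs k‖ ≤ δ k)
    (hsum : Summable δ)
    (a : ℝ) (ha : 0 < a) (haα : ∀ k, a ≤ α k * (1 - α k))
    (x : ℕ → E) (hx : ∀ k ≥ 1, x (k + 1) = T k (x k)) :
    Filter.Tendsto (fun k => ‖G k (x k) - x k‖) Filter.atTop (nhds 0) := by
  set r : ℕ → ℝ := fun k => ‖G k (x k) - x k‖ with hr
  have hrnn : ∀ k, 0 ≤ r k := fun k => norm_nonneg _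
  have hxs_bd : ∀ k, ‖xs k‖ ≤ X := by
    intro k
    have hfx : T k (xs k) = xs k := by
      rw [hT, hfix]; module
    calc ‖xs k‖ = ‖T k (xs k)‖ := by rw [hfx]
    _ ≤ X := hbound _ _
  have hx_bd : ∀ k, 1 ≤ k → ‖x (k + 1)‖ ≤ X := by
    intro k hk; rw [hx k hk]; exact hbound _ _
  set Ek : ℕ → ℝ := fun k => ‖x k - xs k‖ ^ 2 with hEk
  have key : ∀ k, 1 ≤ k → a * r k ^ 2 ≤ Ek k - Ek (k + 1) + 4 * X * δ k := by
    intro k hk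
    have hαk := hα k
    set u : E := x k - xs k
    set v : E := G k (x k) - xs k
    have huv : u - v = x k - G k (x k) := by simp [u, v]
    have hstep : x (k + 1) - xs k = (1 - α k) • u + α k • v := by
      rw [hx k hk, hT]; simp only [u, v]; module
    have hid : ‖x (k + 1) - xs k‖ ^ 2
        = (1 - α k) * ‖u‖ ^ 2 + α k * ‖v‖ ^ 2 - α k * (1 - α k) * ‖u - v‖ ^ 2 := by
      rw [hstep, avg_norm_sq_identity]
    have hvu : ‖v‖ ≤ ‖u‖ := by
      have := hG k (x k) (xs k)
      rwa [hfix] at this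
    have hruv : ‖u - v‖ = r k := by rw [huv, ← norm_neg]; simp [r]
    have h1 : ‖x (k + 1) - xs k‖ ^ 2 ≤ Ek k - a * r k ^ 2 := by
      rw [hid, ← hruv]
      have hα1 : 0 < α k := hαk.1
      have hα2 : α k < 1 := hαk.2
      have haa := haα k
      have hsq : ‖v‖ ^ 2 ≤ ‖u‖ ^ 2 := by
        nlinarith [norm_nonneg v, norm_nonneg u]
      have : a * ‖u - v‖ ^ 2 ≤ α k * (1 - α k) * ‖u - v‖ ^ 2 := by
        nlinarith [sq_nonneg ‖u - v‖]
      simp only [Ek, u]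
      nlinarith
    have h2 : Ek (k + 1) ≤ ‖x (k + 1) - xs k‖ ^ 2 + 4 * X * δ k := by
      set w : E := x (k + 1) - xs (k + 1)
      set z : E := x (k + 1) - xs k
      have hwz : ‖w - z‖ ≤ δ k := by
        have : w - z = -(xs (k + 1) - xs k) := by simp [w, z]
        rw [this, norm_neg]; exact hdrift k
      have hwb : ‖w‖ ≤ 2 * X := by
        calc ‖w‖ ≤ ‖x (k + 1)‖ + ‖xs (k + 1)‖ := norm_sub_le _ _
        _ ≤ 2 * X := by linarith [hx_bd k hk, hxs_bd (k + 1)]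
      have hzb : ‖z‖ ≤ 2 * X := by
        calc ‖z‖ ≤ ‖x (k + 1)‖ + ‖xs k‖ := norm_sub_le _ _
        _ ≤ 2 * X := by linarith [hx_bd k hk, hxs_bd k]
      have hdiff : ‖w‖ - ‖z‖ ≤ ‖w - z‖ := by
        have := norm_sub_norm_le w z
        linarith [le_abs_self (‖w‖ - ‖z‖)]
      have : ‖w‖ ^ 2 - ‖z‖ ^ 2 ≤ 4 * X * δ k := by
        rcases le_or_gt ‖w‖ ‖z‖ with h | h
        · nlinarith [norm_nonneg w, norm_nonneg z, hδ k]
        · nlinarith [norm_nonneg w, norm_nonneg z, hδ k]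
      simp only [Ek]
      linarith
    linarith
  -- summability of shifted residuals
  have hsum' : Summable (fun k => a * r (k + 1) ^ 2) := by
    apply summable_of_sum_range_le (c := Ek 1 + 4 * X * (∑' k, δ k))
    · intro k; positivity
    · intro n
      have hb : ∀ k ∈ Finset.range n,
          a * r (k + 1) ^ 2 ≤ (Ek (k + 1) - Ek (k + 2)) + 4 * X * δ (k + 1) := by
        intro k _
        exact key (k + 1) (Nat.le_add_left 1 k)
      calc ∑ k ∈ Finset.range n, a * r (k + 1) ^ 2
          ≤ ∑ k ∈ Finset.range n, ((Ek (k + 1) - Ek (k + 2)) + 4 * X * δ (k + 1)) :=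
            Finset.sum_le_sum hb
        _ = (Ek 1 - Ek (n + 1)) + 4 * X * ∑ k ∈ Finset.range n, δ (k + 1) := by
            rw [Finset.sum_add_distrib, Finset.sum_range_sub' (fun i => Ek (i + 1)),
              ← Finset.mul_sum]
        _ ≤ Ek 1 + 4 * X * (∑' k, δ k) := by
            have h1 : 0 ≤ Ek (n + 1) := sq_nonneg _
            have h2 : ∑ k ∈ Finset.range n, δ (k + 1) ≤ ∑' k, δ k := by
              calc ∑ k ∈ Finset.range n, δ (k + 1)
                  ≤ ∑ k ∈ Finset.range (n + 1), δ k := by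
                    rw [Finset.sum_range_succ']; linarith [hδ 0]
                _ ≤ ∑' k, δ k := Summable.sum_le_tsum _ (fun i _ => hδ i) hsum
            have h4X : 0 ≤ 4 * X := by linarith
            nlinarith
  have h0 : Tendsto (fun k => a * r (k + 1) ^ 2) atTop (nhds 0) :=
    hsum'.tendsto_atTop_zero
  have h1 : Tendsto (fun k => r (k + 1) ^ 2) atTop (nhds 0) := by
    have := h0.const_mul (a⁻¹)
    simp only [mul_zero] at this
    convert this using 2 with k
    field_simp
  have h2 : Tendsto (fun k => r (k + 1)) atTop (nhds 0) := by
    have hc : Tendsto (fun k => Real.sqrt (r (k + 1) ^ 2)) atTop (nhds (Real.sqrt 0)) :=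
      (Real.continuous_sqrt.tendsto 0).comp h1
    simp only [Real.sqrt_zero] at hc
    convert hc using 2 with k
    rw [Real.sqrt_sq (hrnn _)]
  exact (Filter.tendsto_add_atTop_iff_nat 1).mp h2
end

section
/- Let f : E → ℝ be differentiable, strongly convex with constant m > 0 (i.e. x ↦ f(x) − (m/2)‖x‖² is convex), with gradient ∇f Lipschitz continuous with constant M ≥ m, and let λ ∈ (0, 2/M). Then the gradient-step map x ↦ x − λ·∇f(x) is a contraction with factor L = max{|1 − λm|, |1 − λM|} < 1, i.e. ‖(x − λ∇f(x)) − (y − λ∇f(y))‖ ≤ L·‖x − y‖ for all x, y ∈ E. -/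
open Set Filter InnerProductSpace intervalIntegral
open scoped RealInnerProductSpace Topology

section Aux

variable {E : Type*} [NormedAddCommGroup E] [InnerProductSpace ℝ E] [CompleteSpace E]

private lemma aux_line_deriv (g : E → ℝ) (g' x v : E) (t : ℝ)
    (hg : HasGradientAt g g' (x + t • v)) :
    HasDerivAt (fun s : ℝ => g (x + s • v)) ⟪g', v⟫_ℝ t := by
  have h1 : HasDerivAt (fun s : ℝ => x + s • v) v t := by
    simpa using ((hasDerivAt_id t).smul_const v).const_add x
  have h2 := (hasGradientAt_iff_hasFDerivAt.1 hg).comp_hasDerivAt t h1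
  simp only [InnerProductSpace.toDual_apply_apply] at h2
  exact h2

private lemma aux_convex_lower (g : E → ℝ) (hc : ConvexOn ℝ Set.univ g) (gx x y : E)
    (hg : HasGradientAt g gx x) : g x + ⟪gx, y - x⟫_ℝ ≤ g y := by
  set φ : ℝ → ℝ := fun s => g (x + s • (y - x)) with hφdef
  have hd : HasDerivAt φ ⟪gx, y - x⟫_ℝ 0 := by
    apply aux_line_deriv
    simpa using hg
  have hslope : Tendsto (slope φ 0) (𝓝[>] 0) (𝓝 ⟪gx, y - x⟫_ℝ) :=
    (hasDerivAt_iff_tendsto_slope.1 hd).mono_left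
      (nhdsWithin_mono _ (fun s hs => ne_of_gt hs))
  have hev : ∀ᶠ t in 𝓝[>] (0:ℝ), slope φ 0 t ≤ g y - g x := by
    filter_upwards [Ioc_mem_nhdsGT_of_mem (Set.mem_Ico.2 ⟨le_refl (0:ℝ), one_pos⟩)]
      with t ht
    have hcx := hc.2 (mem_univ x) (mem_univ y)
      (by linarith [ht.2] : (0:ℝ) ≤ 1 - t) ht.1.le (by ring)
    have hpt : (1 - t) • x + t • y = x + t • (y - x) := by module
    rw [hpt] at hcx
    have hφ0 : φ 0 = g x := by simp [hφdef]
    rw [slope_def_field]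
    have : φ t ≤ (1 - t) * g x + t * g y := by simpa [hφdef] using hcx
    rw [div_le_iff₀ (by simpa using ht.1)]
    simp only [sub_zero, hφ0]
    nlinarith [ht.1]
  have := le_of_tendsto hslope hev
  linarith

private lemma aux_grad_h (f : E → ℝ) (f' : E) (m : ℝ) (x : E) (hf : HasGradientAt f f' x) :
    HasGradientAt (fun z => f z - m / 2 * ‖z‖ ^ 2) (f' - m • x) x := by
  have hq : HasFDerivAt (fun z : E => m / 2 * ⟪z, z⟫_ℝ)
      ((m / 2) • ((fderivInnerCLM ℝ ((x : E), (x : E))).comp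
        ((ContinuousLinearMap.id ℝ E).prod (ContinuousLinearMap.id ℝ E)))) x :=
    ((hasFDerivAt_id x).inner ℝ (hasFDerivAt_id x)).const_mul (m / 2)
  have hq' : HasFDerivAt (fun z : E => m / 2 * ‖z‖ ^ 2)
      ((m / 2) • ((fderivInnerCLM ℝ ((x : E), (x : E))).comp
        ((ContinuousLinearMap.id ℝ E).prod (ContinuousLinearMap.id ℝ E)))) x := by
    have : (fun z : E => m / 2 * ‖z‖ ^ 2) = fun z : E => m / 2 * ⟪z, z⟫_ℝ := by
      funext z; rw [real_inner_self_eq_norm_sq]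
    rw [this]; exact hq
  have hsub := (hasGradientAt_iff_hasFDerivAt.1 hf).sub hq'
  rw [hasGradientAt_iff_hasFDerivAt]
  refine hsub.congr_fderiv ?_
  ext v
  simp [InnerProductSpace.toDual_apply_apply, inner_sub_left, inner_smul_left,
    fderivInnerCLM_apply, real_inner_comm x v]
  ring

private lemma aux_descent (f : E → ℝ) (f' : E → E) (M : ℝ) (hM : 0 ≤ M)
    (hgrad : ∀ x, HasGradientAt f (f' x) x)
    (hlip : ∀ x y, ‖f' x - f' y‖ ≤ M * ‖x - y‖) (x y : E) :
    f y ≤ f x + ⟪f' x, y - x⟫_ℝ + M / 2 * ‖y - x‖ ^ 2 := by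
  set d := y - x with hd
  have hcontf' : Continuous f' := by
    refine (LipschitzWith.of_dist_le_mul (K := ⟨M, hM⟩) ?_).continuous
    intro a b
    rw [dist_eq_norm, dist_eq_norm]; exact hlip a b
  have hφ : ∀ t : ℝ, HasDerivAt (fun s : ℝ => f (x + s • d)) ⟪f' (x + t • d), d⟫_ℝ t :=
    fun t => aux_line_deriv f (f' (x + t • d)) x d t (hgrad _)
  have hcont2 : Continuous fun t : ℝ => ⟪f' (x + t • d), d⟫_ℝ := by
    exact (hcontf'.comp (continuous_const.add (continuous_id.smul continuous_const))).inner
      continuous_const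
  have heq : ∫ t in (0:ℝ)..1, ⟪f' (x + t • d), d⟫_ℝ = f y - f x := by
    have := integral_eq_sub_of_hasDerivAt (fun t _ => hφ t) (hcont2.intervalIntegrable 0 1)
    simpa [hd] using this
  have hmono : ∫ t in (0:ℝ)..1, ⟪f' (x + t • d), d⟫_ℝ
      ≤ ∫ t in (0:ℝ)..1, (⟪f' x, d⟫_ℝ + t * (M * ‖d‖ ^ 2)) := by
    refine integral_mono_on zero_le_one (hcont2.intervalIntegrable 0 1)
      ((Continuous.intervalIntegrable (by fun_prop) 0 1)) ?_
    intro t ht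
    have h1 : ⟪f' (x + t • d) - f' x, d⟫_ℝ ≤ ‖f' (x + t • d) - f' x‖ * ‖d‖ :=
      real_inner_le_norm _ _
    have h2 : ‖f' (x + t • d) - f' x‖ ≤ M * (t * ‖d‖) := by
      have := hlip (x + t • d) x
      simpa [norm_smul, abs_of_nonneg ht.1] using this
    have h3 : ⟪f' (x + t • d), d⟫_ℝ = ⟪f' x, d⟫_ℝ + ⟪f' (x + t • d) - f' x, d⟫_ℝ := by
      rw [inner_sub_left]; ring
    nlinarith [norm_nonneg d, ht.1]
  have hval : ∫ t in (0:ℝ)..1, (⟪f' x, d⟫_ℝ + t * (M * ‖d‖ ^ 2))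
      = ⟪f' x, d⟫_ℝ + M / 2 * ‖d‖ ^ 2 := by
    rw [integral_add intervalIntegrable_const
      ((intervalIntegral.intervalIntegrable_id).mul_const _)]
    simp [integral_mul_const, integral_id]
    ring
  rw [heq, hval] at hmono
  linarith

/-- Co-coercivity of the gradient of the convex function `f - m/2 ‖·‖²`. -/
private lemma aux_key (f : E → ℝ) (f' : E → E) (m M : ℝ) (hm : 0 < m) (hmM : m ≤ M)
    (hsc : ConvexOn ℝ Set.univ (fun x => f x - m / 2 * ‖x‖ ^ 2))
    (hgrad : ∀ x, HasGradientAt f (f' x) x)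
    (hlip : ∀ x y, ‖f' x - f' y‖ ≤ M * ‖x - y‖) (x y : E) :
    ‖(f' x - m • x) - (f' y - m • y)‖ ^ 2
      ≤ (M - m) * ⟪(f' x - m • x) - (f' y - m • y), x - y⟫_ℝ := by
  set h : E → ℝ := fun z => f z - m / 2 * ‖z‖ ^ 2 with hh
  set h' : E → E := fun z => f' z - m • z with hh'
  have hL : ∀ a b : E, h a + ⟪h' a, b - a⟫_ℝ ≤ h b := fun a b =>
    aux_convex_lower h hsc (h' a) a b (aux_grad_h f (f' a) m a (hgrad a))
  have hU : ∀ a b : E, h b ≤ h a + ⟪h' a, b - a⟫_ℝ + (M - m) / 2 * ‖b - a‖ ^ 2 := by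
    intro a b
    have hdes := aux_descent f f' M (le_trans hm.le hmM) hgrad hlip a b
    have hid : ‖b‖ ^ 2 = ‖a‖ ^ 2 + 2 * ⟪a, b - a⟫_ℝ + ‖b - a‖ ^ 2 := by
      have := norm_add_sq_real a (b - a)
      simpa using this
    have hid2 : m / 2 * ‖b‖ ^ 2
        = m / 2 * ‖a‖ ^ 2 + m * ⟪a, b - a⟫_ℝ + m / 2 * ‖b - a‖ ^ 2 := by
      rw [hid]; ring
    have hinner : ⟪h' a, b - a⟫_ℝ = ⟪f' a, b - a⟫_ℝ - m * ⟪a, b - a⟫_ℝ := by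
      simp [hh', inner_sub_left, real_inner_smul_left]
    simp only [hh]
    rw [hinner]
    linarith
  rcases eq_or_lt_of_le hmM with heq | hlt
  · -- m = M : the auxiliary function is affine, gradients coincide
    have haff : ∀ a b : E, h b = h a + ⟪h' a, b - a⟫_ℝ := by
      intro a b
      have h1 := hU a b
      rw [← heq] at h1
      simp only [sub_self, zero_div, zero_mul, add_zero] at h1
      exact le_antisymm h1 (hL a b)
    set u := h' x - h' y with hu
    have e1 : h (x + u) = h x + ⟪h' x, u⟫_ℝ := by
      have := haff x (x + u); simpa using this
    have e2 : h (x + u) = h y + ⟪h' y, x + u - y⟫_ℝ := haff y (x + u)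
    have e3 : h x = h y + ⟪h' y, x - y⟫_ℝ := haff y x
    have e4 : ⟪h' y, x + u - y⟫_ℝ = ⟪h' y, x - y⟫_ℝ + ⟪h' y, u⟫_ℝ := by
      rw [show x + u - y = (x - y) + u by abel, inner_add_right]
    have e5 : ⟪h' x, u⟫_ℝ = ⟪h' y, u⟫_ℝ := by linarith [e1, e2.trans (by rw [e4]), e3]
    have e6 : ‖u‖ ^ 2 = 0 := by
      rw [← real_inner_self_eq_norm_sq, hu, inner_sub_left]
      linarith
    rw [← heq]
    simp only [sub_self, zero_mul]
    rw [show f' x - m • x - (f' y - m • y) = u from rfl] at *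
    linarith [e6]
  · -- m < M
    have hK : (0:ℝ) < M - m := sub_pos.2 hlt
    have strong : ∀ a b : E,
        h a + ⟪h' a, b - a⟫_ℝ + ‖h' b - h' a‖ ^ 2 / (2 * (M - m)) ≤ h b := by
      intro a b
      set u := h' b - h' a with hu
      set z := b - (M - m)⁻¹ • u with hz
      have h1 := hL a z
      have h2 := hU b z
      have e1 : ⟪h' a, z - a⟫_ℝ = ⟪h' a, b - a⟫_ℝ - (M - m)⁻¹ * ⟪h' a, u⟫_ℝ := by
        rw [show z - a = (b - a) - (M - m)⁻¹ • u by rw [hz]; abel,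
          inner_sub_right, real_inner_smul_right]
      have ezb : z - b = -((M - m)⁻¹ • u) := by rw [hz]; abel
      have e2 : ⟪h' b, z - b⟫_ℝ = -((M - m)⁻¹ * ⟪h' b, u⟫_ℝ) := by
        rw [ezb, inner_neg_right, real_inner_smul_right]
      have e3 : ‖z - b‖ ^ 2 = (M - m)⁻¹ ^ 2 * ‖u‖ ^ 2 := by
        rw [ezb, norm_neg, norm_smul, Real.norm_eq_abs,
          abs_of_pos (inv_pos.2 hK), mul_pow]
      have e4 : ⟪h' b, u⟫_ℝ - ⟪h' a, u⟫_ℝ = ‖u‖ ^ 2 := by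
        rw [← inner_sub_left, ← hu, real_inner_self_eq_norm_sq]
      have e5 : (M - m)⁻¹ * ⟪h' b, u⟫_ℝ - (M - m)⁻¹ * ⟪h' a, u⟫_ℝ
          = (M - m)⁻¹ * ‖u‖ ^ 2 := by rw [← mul_sub, e4]
      have e6 : (M - m)⁻¹ * ‖u‖ ^ 2 - (M - m) / 2 * ((M - m)⁻¹ ^ 2 * ‖u‖ ^ 2)
          = ‖u‖ ^ 2 / (2 * (M - m)) := by field_simp; ring
      rw [e1] at h1
      rw [e2, e3] at h2
      linarith
    have s1 := strong y x
    have s2 := strong x y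
    have e7 : ⟪h' x - h' y, x - y⟫_ℝ = ⟪h' x, x - y⟫_ℝ - ⟪h' y, x - y⟫_ℝ := by
      rw [inner_sub_left]
    have e8 : ⟪h' x, y - x⟫_ℝ = -⟪h' x, x - y⟫_ℝ := by
      rw [show y - x = -(x - y) by abel, inner_neg_right]
    have e9 : ‖h' y - h' x‖ = ‖h' x - h' y‖ := norm_sub_rev _ _
    rw [e9] at s2
    rw [e8] at s2
    have hsum : ‖h' x - h' y‖ ^ 2 / (M - m) ≤ ⟪h' x - h' y, x - y⟫_ℝ := by
      rw [e7]
      have : ‖h' x - h' y‖ ^ 2 / (2 * (M - m)) + ‖h' x - h' y‖ ^ 2 / (2 * (M - m))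
          = ‖h' x - h' y‖ ^ 2 / (M - m) := by field_simp; ring
      linarith
    have := (div_le_iff₀ hK).1 hsum
    calc ‖(f' x - m • x) - (f' y - m • y)‖ ^ 2 = ‖h' x - h' y‖ ^ 2 := rfl
      _ ≤ ⟪h' x - h' y, x - y⟫_ℝ * (M - m) := this
      _ = (M - m) * ⟪(f' x - m • x) - (f' y - m • y), x - y⟫_ℝ := by rw [mul_comm]

end Aux

set_option maxHeartbeats 1600000 in
/-- The gradient step of a strongly convex, strongly smooth function is a contraction. -/
theorem gradient_step_is_contraction
    {E : Type*} [NormedAddCommGroup E] [InnerProductSpace ℝ E] [CompleteSpace E]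
    (f : E → ℝ) (f' : E → E) (m M : ℝ) (hm : 0 < m) (hmM : m ≤ M)
    (hsc : ConvexOn ℝ Set.univ (fun x => f x - m / 2 * ‖x‖ ^ 2))
    (hgrad : ∀ x, HasGradientAt f (f' x) x)
    (hlip : ∀ x y, ‖f' x - f' y‖ ≤ M * ‖x - y‖)
    (lam : ℝ) (hlam : lam ∈ Set.Ioo 0 (2 / M)) :
    max |1 - lam * m| |1 - lam * M| < 1 ∧
    ∀ x y : E, ‖(x - lam • f' x) - (y - lam • f' y)‖
        ≤ max |1 - lam * m| |1 - lam * M| * ‖x - y‖ := by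
  obtain ⟨hlam0, hlam2⟩ := hlam
  have hM0 : (0:ℝ) < M := lt_of_lt_of_le hm hmM
  have hlamM : lam * M < 2 := by
    have := (lt_div_iff₀ hM0).1 hlam2; linarith
  have hlmle : lam * m ≤ lam * M := mul_le_mul_of_nonneg_left hmM hlam0.le
  have hlamm0 : 0 < lam * m := mul_pos hlam0 hm
  have hmM0 : (0:ℝ) < m + M := by linarith
  constructor
  · exact max_lt (abs_lt.2 ⟨by linarith, by linarith⟩) (abs_lt.2 ⟨by linarith, by linarith⟩)
  intro x y
  set D := ‖x - y‖ with hD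
  set G := ‖f' x - f' y‖ with hG
  set P := ⟪f' x - f' y, x - y⟫_ℝ with hP
  have hDnn : 0 ≤ D := norm_nonneg _
  have hGnn : 0 ≤ G := norm_nonneg _
  have hkey := aux_key f f' m M hm hmM hsc hgrad hlip x y
  have hu : (f' x - m • x) - (f' y - m • y) = (f' x - f' y) - m • (x - y) := by
    rw [smul_sub]; abel
  rw [hu] at hkey
  have hexp1 : ‖(f' x - f' y) - m • (x - y)‖ ^ 2 = G ^ 2 - 2 * m * P + m ^ 2 * D ^ 2 := by
    rw [norm_sub_sq_real, real_inner_smul_right, norm_smul, Real.norm_eq_abs,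
      abs_of_pos hm, mul_pow]
    ring
  have hexp2 : ⟪(f' x - f' y) - m • (x - y), x - y⟫_ℝ = P - m * D ^ 2 := by
    rw [inner_sub_left, real_inner_smul_left, real_inner_self_eq_norm_sq]
  rw [hexp1, hexp2] at hkey
  have hA : G ^ 2 + m * M * D ^ 2 ≤ (m + M) * P := by nlinarith [hkey]
  have hCS : P ≤ G * D := real_inner_le_norm _ _
  have hGM : G ≤ M * D := hlip x y
  have hCS' : (m + M) * P ≤ (m + M) * (G * D) := mul_le_mul_of_nonneg_left hCS hmM0.le
  have hGm : m * D ≤ G := by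
    nlinarith [hA, hCS', hDnn, hGnn, hGM, mul_nonneg (sub_nonneg.2 hmM) hDnn]
  have hsq : ‖(x - lam • f' x) - (y - lam • f' y)‖ ^ 2
      = D ^ 2 - 2 * lam * P + lam ^ 2 * G ^ 2 := by
    have hrw : (x - lam • f' x) - (y - lam • f' y) = (x - y) - lam • (f' x - f' y) := by
      rw [smul_sub]; abel
    rw [hrw, norm_sub_sq_real, real_inner_smul_right, norm_smul, Real.norm_eq_abs,
      abs_of_pos hlam0, mul_pow, real_inner_comm (f' x - f' y) (x - y), ← hP, ← hG, ← hD]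
    ring
  have key2 : 0 ≤ 2 * lam * ((m + M) * P - G ^ 2 - m * M * D ^ 2) := by
    apply mul_nonneg (by linarith)
    linarith
  rcases le_or_gt (lam * (m + M)) 2 with hc | hc
  · -- L = 1 - lam * m
    have h1m : 0 ≤ 1 - lam * m := by linarith
    have hLeq : max |1 - lam * m| |1 - lam * M| = 1 - lam * m := by
      rw [abs_of_nonneg h1m]
      exact max_eq_left (abs_le.2 ⟨by linarith, by linarith⟩)
    rw [hLeq]
    have hG2 : m ^ 2 * D ^ 2 ≤ G ^ 2 := by
      have := pow_le_pow_left₀ (mul_nonneg hm.le hDnn) hGm 2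
      nlinarith [this]
    have key1 : 0 ≤ lam * (2 - lam * (m + M)) * (G ^ 2 - m ^ 2 * D ^ 2) :=
      mul_nonneg (mul_nonneg hlam0.le (by linarith)) (by linarith)
    have hsqle : ‖(x - lam • f' x) - (y - lam • f' y)‖ ^ 2 ≤ ((1 - lam * m) * D) ^ 2 := by
      rw [hsq]
      have hident : (m + M) * (((1 - lam * m) * D) ^ 2 - (D ^ 2 - 2 * lam * P + lam ^ 2 * G ^ 2))
          = lam * (2 - lam * (m + M)) * (G ^ 2 - m ^ 2 * D ^ 2)
            + 2 * lam * ((m + M) * P - G ^ 2 - m * M * D ^ 2) := by ring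
      nlinarith [key1, key2, hmM0, hident]
    have := Real.sqrt_le_sqrt hsqle
    rwa [Real.sqrt_sq (norm_nonneg _),
      Real.sqrt_sq (mul_nonneg h1m hDnn)] at this
  · -- L = lam * M - 1
    have h1M : 0 ≤ lam * M - 1 := by linarith
    have hLeq : max |1 - lam * m| |1 - lam * M| = lam * M - 1 := by
      rw [abs_of_nonpos (by linarith : 1 - lam * M ≤ 0)]
      rw [show -(1 - lam * M) = lam * M - 1 by ring]
      exact max_eq_right (abs_le.2 ⟨by linarith, by linarith⟩)
    rw [hLeq]
    have hG2 : G ^ 2 ≤ M ^ 2 * D ^ 2 := by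
      have := pow_le_pow_left₀ hGnn hGM 2
      nlinarith [this]
    have key1 : 0 ≤ lam * (lam * (m + M) - 2) * (M ^ 2 * D ^ 2 - G ^ 2) :=
      mul_nonneg (mul_nonneg hlam0.le (by linarith)) (by linarith)
    have hsqle : ‖(x - lam • f' x) - (y - lam • f' y)‖ ^ 2 ≤ ((lam * M - 1) * D) ^ 2 := by
      rw [hsq]
      have hident : (m + M) * (((lam * M - 1) * D) ^ 2 - (D ^ 2 - 2 * lam * P + lam ^ 2 * G ^ 2))
          = lam * (lam * (m + M) - 2) * (M ^ 2 * D ^ 2 - G ^ 2)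
            + 2 * lam * ((m + M) * P - G ^ 2 - m * M * D ^ 2) := by ring
      nlinarith [key1, key2, hmM0, hident]
    have := Real.sqrt_le_sqrt hsqle
    rwa [Real.sqrt_sq (norm_nonneg _),
      Real.sqrt_sq (mul_nonneg h1M hDnn)] at this
end

section
/- [Running projected gradient, tracking convergence] Let M > 0 and λ ∈ (0, 2/M). For k = 1, 2, … let f_k : E → ℝ be differentiable, strongly convex with constant m_k > 0, with gradient ∇f_k Lipschitz with constant M_k, where m_k ≤ M_k ≤ M; let K_k ⊆ E be nonempty closed convex sets with metric projections Π_k. Suppose x*_k satisfy Π_k(x*_k − λ·∇f_k(x*_k)) = x*_k and ‖x*_{k+1} − x*_k‖ ≤ δ. Set L_k = max{|1 − λm_k|, |1 − λM_k|} and suppose L̄ ∈ (0,1) satisfies L_k ≤ L̄ for all k. Then the running projected gradient iteration x_{k+1} = Π_k(x_k − λ·∇f_k(x_k)) satisfies, for every k ≥ 1: ‖x_k − x*_k‖ ≤ (L₁⋯L_{k−1})·‖x₁ − x*₁‖ + δ·(1 − L̄^{k−1})/(1 − L̄). -/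
open scoped RealInnerProductSpace

lemma line_hasDerivAt {E : Type*} [NormedAddCommGroup E] [InnerProductSpace ℝ E] [CompleteSpace E]
    (f : E → ℝ) (f' : E → E) (hgrad : ∀ x, HasGradientAt f (f' x) x)
    (x u : E) (t : ℝ) :
    HasDerivAt (fun s : ℝ => f (x + s • u)) ⟪f' (x + t • u), u⟫ t := by
  have h1 : HasDerivAt (fun s : ℝ => x + s • u) u t := by
    simpa using ((hasDerivAt_id t).smul_const u).const_add x
  have h2 := (hgrad (x + t • u)).hasFDerivAt.comp_hasDerivAt t h1
  simpa [InnerProductSpace.toDual_apply_apply, Function.comp_def] using h2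

lemma descent_lemma {E : Type*} [NormedAddCommGroup E] [InnerProductSpace ℝ E] [CompleteSpace E]
    (f : E → ℝ) (f' : E → E) (C : ℝ) (hC : 0 ≤ C)
    (hgrad : ∀ x, HasGradientAt f (f' x) x)
    (hlip : ∀ x y, ‖f' x - f' y‖ ≤ C * ‖x - y‖) (x y : E) :
    f y ≤ f x + ⟪f' x, y - x⟫ + C / 2 * ‖y - x‖ ^ 2 := by
  set u := y - x with hu
  have hcont : Continuous f' := by
    have : LipschitzWith C.toNNReal f' := by
      intro a b
      rw [edist_dist, edist_dist, dist_eq_norm, dist_eq_norm]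
      calc ENNReal.ofReal ‖f' a - f' b‖ ≤ ENNReal.ofReal (C * ‖a - b‖) :=
            ENNReal.ofReal_le_ofReal (hlip a b)
        _ = C.toNNReal * ENNReal.ofReal ‖a - b‖ := by
            rw [ENNReal.ofReal_mul hC]; rfl
    exact this.continuous
  have hg : ∀ t ∈ Set.uIcc (0:ℝ) 1,
      HasDerivAt (fun s : ℝ => f (x + s • u)) ⟪f' (x + t • u), u⟫ t :=
    fun t _ => line_hasDerivAt f f' hgrad x u t
  have hci : Continuous fun t : ℝ => ⟪f' (x + t • u), u⟫ := by
    apply Continuous.inner (hcont.comp (by continuity)) continuous_const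
  have hcr : Continuous fun t : ℝ => ⟪f' x, u⟫ + C * ‖u‖ ^ 2 * t := by continuity
  have hint := intervalIntegral.integral_eq_sub_of_hasDerivAt hg
    (hci.intervalIntegrable 0 1)
  have key : ∫ t in (0:ℝ)..1, ⟪f' (x + t • u), u⟫ ≤
      ∫ t in (0:ℝ)..1, (⟪f' x, u⟫ + C * ‖u‖ ^ 2 * t) := by
    apply intervalIntegral.integral_mono_on (by norm_num)
      (hci.intervalIntegrable 0 1) (hcr.intervalIntegrable 0 1)
    intro t ht
    have h1 : ⟪f' (x + t • u) - f' x, u⟫ ≤ C * ‖u‖ ^ 2 * t := by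
      calc ⟪f' (x + t • u) - f' x, u⟫ ≤ ‖f' (x + t • u) - f' x‖ * ‖u‖ :=
            real_inner_le_norm _ _
        _ ≤ (C * ‖(x + t • u) - x‖) * ‖u‖ :=
            mul_le_mul_of_nonneg_right (hlip _ _) (norm_nonneg _)
        _ = C * ‖u‖ ^ 2 * t := by
            rw [add_sub_cancel_left, norm_smul, Real.norm_eq_abs,
              abs_of_nonneg ht.1]; ring
    rw [inner_sub_left] at h1
    linarith
  have hrhs : ∫ t in (0:ℝ)..1, (⟪f' x, u⟫ + C * ‖u‖ ^ 2 * t)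
      = ⟪f' x, u⟫ + C / 2 * ‖u‖ ^ 2 := by
    rw [intervalIntegral.integral_add intervalIntegrable_const
      (((by continuity : Continuous fun t : ℝ => C * ‖u‖ ^ 2 * t).intervalIntegrable 0 1)),
      intervalIntegral.integral_const_mul, integral_id]
    simp
    ring
  rw [hint] at key
  rw [hrhs] at key
  have h0 : x + (0:ℝ) • u = x := by simp
  have h1 : x + (1:ℝ) • u = y := by simp [hu]
  rw [h0, h1] at key
  linarith
lemma convex_grad_ineq {E : Type*} [NormedAddCommGroup E] [InnerProductSpace ℝ E] [CompleteSpace E]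
    (h : E → ℝ) (h' : E → E) (hconv : ConvexOn ℝ Set.univ h)
    (hgrad : ∀ x, HasGradientAt h (h' x) x) (x y : E) :
    h x + ⟪h' x, y - x⟫ ≤ h y := by
  set u := y - x with hu
  set g : ℝ → ℝ := fun t => h (x + t • u) with hg
  have hgconv : ConvexOn ℝ Set.univ g := by
    have := hconv.comp_affineMap
      (AffineMap.const ℝ ℝ x + LinearMap.toAffineMap (LinearMap.toSpanSingleton ℝ E u))
    simpa [Function.comp_def, hg, LinearMap.toSpanSingleton_apply] using this
  have hd : HasDerivAt g ⟪h' x, u⟫ 0 := by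
    simpa using line_hasDerivAt h h' hgrad x u 0
  -- slope bound: for t ∈ (0,1], (g t - g 0)/t ≤ g 1 - g 0
  have hslope : ∀ t ∈ Set.Ioo (0:ℝ) 1, slope g 0 t ≤ g 1 - g 0 := by
    intro t ht
    have hcomb := hgconv.2 (Set.mem_univ 0) (Set.mem_univ 1)
      (by linarith [ht.2] : (0:ℝ) ≤ 1 - t) (le_of_lt ht.1) (by ring)
    simp only [smul_eq_mul, mul_zero, mul_one, zero_add] at hcomb
    have : g (t : ℝ) ≤ (1 - t) * g 0 + t * g 1 := by simpa using hcomb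
    rw [slope_def_field, sub_zero, div_le_iff₀ ht.1]
    nlinarith [ht.1, ht.2]
  have htend : Filter.Tendsto (slope g 0) (nhdsWithin 0 (Set.Ioi 0)) (nhds ⟪h' x, u⟫) :=
    (hasDerivAt_iff_tendsto_slope.1 hd).mono_left
      (nhdsWithin_mono 0 (fun t ht => ne_of_gt ht))
  have hle : ⟪h' x, u⟫ ≤ g 1 - g 0 := by
    refine le_of_tendsto htend ?_
    filter_upwards [Ioo_mem_nhdsGT_of_mem (Set.left_mem_Ico.2 one_pos)] using hslope
  have e0 : g 0 = h x := by simp [hg]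
  have e1 : g 1 = h y := by simp [hg, hu]
  rw [e0, e1] at hle
  linarith

lemma one_sided_est {E : Type*} [NormedAddCommGroup E] [InnerProductSpace ℝ E] [CompleteSpace E]
    (h : E → ℝ) (h' : E → E) (C : ℝ)
    (hconv : ConvexOn ℝ Set.univ h)
    (hgrad : ∀ x, HasGradientAt h (h' x) x)
    (hdesc : ∀ a b, h b ≤ h a + ⟪h' a, b - a⟫ + C / 2 * ‖b - a‖ ^ 2)
    (x y : E) (t : ℝ) :
    (t - C * t ^ 2 / 2) * ‖h' y - h' x‖ ^ 2 ≤ h y - h x - ⟪h' x, y - x⟫ := by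
  set v := h' y - h' x with hv
  set z := y - t • v with hz
  have hg := convex_grad_ineq h h' hconv hgrad x z
  have hd := hdesc y z
  have e1 : ⟪h' x, z - x⟫ = ⟪h' x, y - x⟫ - t * ⟪h' x, v⟫ := by
    rw [show z - x = (y - x) - t • v from by rw [hz]; abel, inner_sub_right,
      real_inner_smul_right]
  have e2 : ⟪h' y, z - y⟫ = -(t * ⟪h' y, v⟫) := by
    rw [show z - y = -(t • v) from by rw [hz]; abel, inner_neg_right,
      real_inner_smul_right]
  have e3 : ‖z - y‖ ^ 2 = t ^ 2 * ‖v‖ ^ 2 := by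
    rw [show z - y = -(t • v) from by rw [hz]; abel, norm_neg, norm_smul,
      Real.norm_eq_abs, mul_pow, sq_abs]
  have e4 : ⟪h' y, v⟫ - ⟪h' x, v⟫ = ‖v‖ ^ 2 := by
    rw [← inner_sub_left, hv, real_inner_self_eq_norm_sq]
  rw [e1] at hg
  rw [e2, e3] at hd
  have e5 : t * ⟪h' y, v⟫ - t * ⟪h' x, v⟫ = t * ‖v‖ ^ 2 := by rw [← mul_sub, e4]
  nlinarith [hg, hd, e5]

lemma cocoercive {E : Type*} [NormedAddCommGroup E] [InnerProductSpace ℝ E] [CompleteSpace E]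
    (h : E → ℝ) (h' : E → E) (C : ℝ) (hC : 0 ≤ C)
    (hconv : ConvexOn ℝ Set.univ h)
    (hgrad : ∀ x, HasGradientAt h (h' x) x)
    (hdesc : ∀ a b, h b ≤ h a + ⟪h' a, b - a⟫ + C / 2 * ‖b - a‖ ^ 2)
    (x y : E) :
    ‖h' x - h' y‖ ^ 2 ≤ C * ⟪h' x - h' y, x - y⟫ := by
  have key : ∀ t : ℝ, (2 * t - C * t ^ 2) * ‖h' x - h' y‖ ^ 2 ≤ ⟪h' x - h' y, x - y⟫ := by
    intro t
    have h1 := one_sided_est h h' C hconv hgrad hdesc x y t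
    have h2 := one_sided_est h h' C hconv hgrad hdesc y x t
    have hn : ‖h' y - h' x‖ = ‖h' x - h' y‖ := norm_sub_rev _ _
    have hi : ⟪h' x - h' y, x - y⟫ = (h y - h x - ⟪h' x, y - x⟫) + (h x - h y - ⟪h' y, x - y⟫) := by
      rw [inner_sub_left]
      have : ⟪h' x, y - x⟫ = -⟪h' x, x - y⟫ := by rw [← inner_neg_right]; congr 1; abel
      rw [this]; ring
    rw [hn] at h1
    rw [hi]
    nlinarith [h1, h2]
  set q := ‖h' x - h' y‖ ^ 2 with hq
  set D := ⟪h' x - h' y, x - y⟫ with hD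
  rcases eq_or_lt_of_le hC with hC0 | hCpos
  · -- C = 0
    rw [← hC0]
    have hvz : q ≤ 0 := by
      by_contra hpos
      push_neg at hpos
      have ht := key ((D + 1) / (2 * q))
      rw [← hC0] at ht
      have h2 : (2 * ((D + 1) / (2 * q)) - 0 * ((D + 1) / (2 * q)) ^ 2) * q = D + 1 := by
        field_simp
        ring
      rw [h2] at ht
      linarith
    have hq0 : 0 ≤ q := by rw [hq]; positivity
    have : q = 0 := le_antisymm hvz hq0
    rw [this, zero_mul]
  · have ht := key (1 / C)
    have hc2 : (2 * (1 / C) - C * (1 / C) ^ 2) = 1 / C := by field_simp; ring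
    rw [hc2] at ht
    calc q = C * (1 / C * q) := by field_simp
      _ ≤ C * D := mul_le_mul_of_nonneg_left ht hC

lemma grad_half_normsq {E : Type*} [NormedAddCommGroup E] [InnerProductSpace ℝ E] [CompleteSpace E]
    (m : ℝ) (z : E) : HasGradientAt (fun w : E => m / 2 * ‖w‖ ^ 2) (m • z) z := by
  rw [hasGradientAt_iff_hasFDerivAt]
  have h := ((hasStrictFDerivAt_norm_sq z).hasFDerivAt).const_mul (m / 2)
  convert h using 1
  · rfl
  ext w
  simp [InnerProductSpace.toDual_apply_apply, inner_smul_left, real_inner_comm]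
  ring

lemma sq_le_imp_norm_le {E : Type*} [NormedAddCommGroup E] (w : E) (r : ℝ)
    (hr : 0 ≤ r) (h : ‖w‖ ^ 2 ≤ r ^ 2) : ‖w‖ ≤ r := by
  nlinarith [norm_nonneg w]

lemma contraction_alg {E : Type*} [NormedAddCommGroup E] [InnerProductSpace ℝ E]
    (u v : E) (a lam C L : ℝ) (hlam : 0 < lam) (hC : 0 ≤ C)
    (hcc : ‖v‖ ^ 2 ≤ C * ⟪v, u⟫) (hlipv : ‖v‖ ≤ C * ‖u‖)
    (hL1 : |a| ≤ L) (hL2 : |a - lam * C| ≤ L) :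
    ‖a • u - lam • v‖ ≤ L * ‖u‖ := by
  have hLnn : 0 ≤ L := le_trans (abs_nonneg a) hL1
  rcases le_or_gt 0 a with hapos | haneg
  · have hnormsq : ‖a • u - lam • v‖ ^ 2
        = a ^ 2 * ‖u‖ ^ 2 - 2 * (a * lam) * ⟪v, u⟫ + lam ^ 2 * ‖v‖ ^ 2 := by
      rw [norm_sub_sq_real, real_inner_smul_left, real_inner_smul_right,
        norm_smul, norm_smul, Real.norm_eq_abs, Real.norm_eq_abs,
        mul_pow, mul_pow, sq_abs, sq_abs, real_inner_comm u v]
      ring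
    have hvunn : 0 ≤ ⟪v, u⟫ := by
      rcases eq_or_lt_of_le hC with hC0 | hCpos
      · have hv2 : ‖v‖ ^ 2 ≤ 0 := by rw [← hC0] at hcc; simpa using hcc
        have hv0 : v = 0 := by
          rw [← norm_eq_zero]
          nlinarith [norm_nonneg v]
        simp [hv0]
      · nlinarith [hcc, sq_nonneg ‖v‖]
    have hlipv' : ‖v‖ ^ 2 ≤ C ^ 2 * ‖u‖ ^ 2 := by
      nlinarith [mul_self_le_mul_self (norm_nonneg v) hlipv]
    rcases le_or_gt (lam * C) (2 * a) with hcase | hcase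
    · have hsq : ‖a • u - lam • v‖ ^ 2 ≤ (a * ‖u‖) ^ 2 := by
        rw [hnormsq]
        nlinarith [mul_le_mul_of_nonneg_left hcc hlam.le,
          mul_nonneg (sub_nonneg.2 hcase) hvunn, hlam.le]
      have h1 := sq_le_imp_norm_le _ _ (mul_nonneg hapos (norm_nonneg u)) hsq
      have h2 : a * ‖u‖ ≤ L * ‖u‖ :=
        mul_le_mul_of_nonneg_right (le_trans (le_abs_self a) hL1) (norm_nonneg u)
      linarith
    · have hCpos : 0 < C := by
        by_contra hc
        push_neg at hc
        nlinarith
      have hsq : ‖a • u - lam • v‖ ^ 2 ≤ ((lam * C - a) * ‖u‖) ^ 2 := by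
        rw [hnormsq]
        nlinarith [mul_nonneg (mul_nonneg (by linarith : (0:ℝ) ≤ 2 * a) hlam.le)
            (sub_nonneg.2 hcc),
          mul_nonneg (mul_nonneg hlam.le (by linarith : (0:ℝ) ≤ lam * C - 2 * a))
            (sub_nonneg.2 hlipv'),
          hCpos]
      have hr : 0 ≤ (lam * C - a) * ‖u‖ := mul_nonneg (by linarith) (norm_nonneg u)
      have h1 := sq_le_imp_norm_le _ _ hr hsq
      have h3 : lam * C - a ≤ L := le_trans (by rw [abs_sub_comm]; exact le_abs_self _) hL2
      have h2 : (lam * C - a) * ‖u‖ ≤ L * ‖u‖ :=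
        mul_le_mul_of_nonneg_right h3 (norm_nonneg u)
      linarith
  · have h3 : lam * C - a ≤ L := le_trans (by rw [abs_sub_comm]; exact le_abs_self _) hL2
    calc ‖a • u - lam • v‖ ≤ ‖a • u‖ + ‖lam • v‖ := norm_sub_le _ _
      _ = -a * ‖u‖ + lam * ‖v‖ := by
          rw [norm_smul, norm_smul, Real.norm_eq_abs, Real.norm_eq_abs,
            abs_of_neg haneg, abs_of_pos hlam]
      _ ≤ -a * ‖u‖ + lam * (C * ‖u‖) := by
          have := mul_le_mul_of_nonneg_left hlipv hlam.le
          linarith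
      _ = (lam * C - a) * ‖u‖ := by ring
      _ ≤ L * ‖u‖ := mul_le_mul_of_nonneg_right h3 (norm_nonneg u)

lemma grad_step_contraction {E : Type*} [NormedAddCommGroup E] [InnerProductSpace ℝ E]
    [CompleteSpace E]
    (f : E → ℝ) (f' : E → E) (m Mk lam : ℝ) (hlam : 0 < lam) (hm : 0 ≤ m) (hmMk : m ≤ Mk)
    (hsc : ConvexOn ℝ Set.univ (fun x => f x - m / 2 * ‖x‖ ^ 2))
    (hgrad : ∀ x, HasGradientAt f (f' x) x)
    (hlip : ∀ x y, ‖f' x - f' y‖ ≤ Mk * ‖x - y‖) (x y : E) :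
    ‖(x - lam • f' x) - (y - lam • f' y)‖ ≤ max |1 - lam * m| |1 - lam * Mk| * ‖x - y‖ := by
  have hC : (0:ℝ) ≤ Mk - m := by linarith
  have hMk : (0:ℝ) ≤ Mk := by linarith
  have hgradh : ∀ z, HasGradientAt (fun w => f w - m / 2 * ‖w‖ ^ 2)
      (f' z - m • z) z := by
    intro z
    rw [hasGradientAt_iff_hasFDerivAt]
    have h1 := (hasGradientAt_iff_hasFDerivAt.1 (hgrad z)).sub
      (hasGradientAt_iff_hasFDerivAt.1 (grad_half_normsq m z))
    simp [map_sub] at h1 ⊢; exact h1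
  have hdescf := descent_lemma f f' Mk hMk hgrad hlip
  have hdesc : ∀ a b, (fun w => f w - m / 2 * ‖w‖ ^ 2) b ≤
      (fun w => f w - m / 2 * ‖w‖ ^ 2) a + ⟪f' a - m • a, b - a⟫
        + (Mk - m) / 2 * ‖b - a‖ ^ 2 := by
    intro a b
    have hnorm : ‖b‖ ^ 2 = ‖a‖ ^ 2 + 2 * ⟪a, b - a⟫ + ‖b - a‖ ^ 2 := by
      have := norm_add_sq_real a (b - a)
      rw [add_sub_cancel] at this
      exact this
    have hin : ⟪f' a - m • a, b - a⟫ = ⟪f' a, b - a⟫ - m * ⟪a, b - a⟫ := by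
      rw [inner_sub_left, real_inner_smul_left]
    simp only
    rw [hin]
    nlinarith [hdescf a b, hnorm]
  have hcc' := cocoercive (fun w => f w - m / 2 * ‖w‖ ^ 2) (fun z => f' z - m • z)
    (Mk - m) hC hsc hgradh hdesc x y
  have hlipv : ‖(f' x - m • x) - (f' y - m • y)‖ ≤ (Mk - m) * ‖x - y‖ := by
    rcases le_or_gt ‖(f' x - m • x) - (f' y - m • y)‖ 0 with hv0 | hvpos
    · exact le_trans hv0 (by positivity)
    · have hCS := real_inner_le_norm ((f' x - m • x) - (f' y - m • y)) (x - y)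
      nlinarith [le_trans hcc' (mul_le_mul_of_nonneg_left hCS hC)]
  have hid : (x - lam • f' x) - (y - lam • f' y)
      = (1 - lam * m) • (x - y) - lam • ((f' x - m • x) - (f' y - m • y)) := by
    module
  rw [hid]
  exact contraction_alg (x - y) _ (1 - lam * m) lam (Mk - m) _ hlam hC hcc' hlipv
    (le_max_left _ _)
    (by rw [show 1 - lam * m - lam * (Mk - m) = 1 - lam * Mk by ring]; exact le_max_right _ _)

lemma proj_vi {E : Type*} [NormedAddCommGroup E] [InnerProductSpace ℝ E]
    (K : Set E) (hKc : Convex ℝ K) (p x : E) (hp : p ∈ K)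
    (hmin : ∀ y ∈ K, ‖x - p‖ ≤ ‖x - y‖) :
    ∀ w ∈ K, ⟪x - p, w - p⟫ ≤ 0 := by
  intro w hw
  by_contra hpos
  push_neg at hpos
  set s : ℝ := ⟪x - p, w - p⟫ with hs
  have hq : 0 < ‖w - p‖ ^ 2 := by
    rcases eq_or_ne w p with rfl | hne
    · exfalso
      rw [hs, sub_self, inner_zero_right] at hpos
      exact absurd hpos (lt_irrefl 0)
    · exact pow_pos (norm_pos_iff.2 (sub_ne_zero.2 hne)) 2
  set t : ℝ := min 1 (s / ‖w - p‖ ^ 2) with ht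
  have ht0 : 0 < t := lt_min one_pos (div_pos hpos hq)
  have ht1 : t ≤ 1 := min_le_left _ _
  have hts : t * ‖w - p‖ ^ 2 ≤ s := by
    have : t ≤ s / ‖w - p‖ ^ 2 := min_le_right _ _
    calc t * ‖w - p‖ ^ 2 ≤ s / ‖w - p‖ ^ 2 * ‖w - p‖ ^ 2 :=
          mul_le_mul_of_nonneg_right this (le_of_lt hq)
      _ = s := div_mul_cancel₀ _ hq.ne'
  have hz : p + t • (w - p) ∈ K := by
    have := hKc hp hw (by linarith : (0:ℝ) ≤ 1 - t) ht0.le (by ring)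
    convert this using 1
    rw [smul_sub]
    module
  have hle := hmin _ hz
  have hexp : ‖x - (p + t • (w - p))‖ ^ 2
      = ‖x - p‖ ^ 2 - 2 * t * s + t ^ 2 * ‖w - p‖ ^ 2 := by
    rw [show x - (p + t • (w - p)) = (x - p) - t • (w - p) from by abel,
      norm_sub_sq_real, real_inner_smul_right, norm_smul, Real.norm_eq_abs,
      mul_pow, sq_abs, hs]
    ring
  have hle2 : ‖x - p‖ ^ 2 ≤ ‖x - (p + t • (w - p))‖ ^ 2 := by
    have h1 := norm_nonneg (x - p)
    nlinarith [hle]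
  rw [hexp] at hle2
  nlinarith [hle2, hts, ht0, hpos]

lemma proj_nonexp {E : Type*} [NormedAddCommGroup E] [InnerProductSpace ℝ E]
    (K : Set E) (hKc : Convex ℝ K) (P : E → E)
    (hP : ∀ x, P x ∈ K ∧ ∀ y ∈ K, ‖x - P x‖ ≤ ‖x - y‖) (a b : E) :
    ‖P a - P b‖ ≤ ‖a - b‖ := by
  have h1 := proj_vi K hKc (P a) a (hP a).1 (hP a).2 (P b) (hP b).1
  have h2 := proj_vi K hKc (P b) b (hP b).1 (hP b).2 (P a) (hP a).1
  have hsum : ‖P a - P b‖ ^ 2 ≤ ⟪a - b, P a - P b⟫ := by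
    have e : ⟪a - b, P a - P b⟫
        = ‖P a - P b‖ ^ 2 + ⟪a - P a, P a - P b⟫ - ⟪b - P b, P a - P b⟫ := by
      rw [show a - b = (P a - P b) + (a - P a) - (b - P b) from by abel,
        inner_sub_left, inner_add_left, real_inner_self_eq_norm_sq]
    have h1' : 0 ≤ ⟪a - P a, P a - P b⟫ := by
      rw [show P a - P b = -(P b - P a) from by abel, inner_neg_right]
      linarith
    linarith [e, h1', h2]
  rcases le_or_gt ‖P a - P b‖ 0 with hz | hz
  · exact le_trans hz (norm_nonneg _)
  · nlinarith [real_inner_le_norm (a - b) (P a - P b), hsum]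

/-- Running projected gradient: tracking convergence under strong convexity. -/
theorem running_projected_gradient_tracking
    {E : Type*} [NormedAddCommGroup E] [InnerProductSpace ℝ E] [CompleteSpace E]
    (M δ lam : ℝ) (hM : 0 < M) (hlam : lam ∈ Set.Ioo 0 (2 / M))
    (f : ℕ → E → ℝ) (f' : ℕ → E → E) (m Mk : ℕ → ℝ)
    (hm : ∀ k, 0 < m k) (hmMk : ∀ k, m k ≤ Mk k) (hMkM : ∀ k, Mk k ≤ M)
    (hsc : ∀ k, ConvexOn ℝ Set.univ (fun x => f k x - m k / 2 * ‖x‖ ^ 2))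
    (hgrad : ∀ k x, HasGradientAt (f k) (f' k x) x)
    (hlip : ∀ k x y, ‖f' k x - f' k y‖ ≤ Mk k * ‖x - y‖)
    (K : ℕ → Set E)
    (hK : ∀ k, (K k).Nonempty ∧ IsClosed (K k) ∧ Convex ℝ (K k))
    (P : ℕ → E → E)
    (hP : ∀ k x, P k x ∈ K k ∧ ∀ y ∈ K k, ‖x - P k x‖ ≤ ‖x - y‖)
    (xs : ℕ → E) (hfix : ∀ k, P k (xs k - lam • f' k (xs k)) = xs k)
    (hdrift : ∀ k, ‖xs (k + 1) - xs k‖ ≤ δ)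
    (L : ℕ → ℝ) (hL : ∀ k, L k = max |1 - lam * m k| |1 - lam * Mk k|)
    (Lbar : ℝ) (hLbar : Lbar ∈ Set.Ioo (0:ℝ) 1) (hLle : ∀ k, L k ≤ Lbar)
    (x : ℕ → E) (hx : ∀ k ≥ 1, x (k + 1) = P k (x k - lam • f' k (x k)))
    (k : ℕ) (hk : 1 ≤ k) :
    ‖x k - xs k‖ ≤ (∏ i ∈ Finset.Icc 1 (k - 1), L i) * ‖x 1 - xs 1‖
      + δ * (1 - Lbar ^ (k - 1)) / (1 - Lbar) := by
  have hdel : 0 ≤ δ := le_trans (norm_nonneg _) (hdrift 0)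
  have hLbar1 : 0 < 1 - Lbar := by linarith [hLbar.2]
  have hLnn : ∀ j, 0 ≤ L j := fun j => by
    rw [hL j]; exact le_trans (abs_nonneg _) (le_max_left _ _)
  -- one-step estimate
  have hstep : ∀ j, 1 ≤ j → ‖x (j + 1) - xs (j + 1)‖ ≤ L j * ‖x j - xs j‖ + δ := by
    intro j hj
    have htri : ‖x (j + 1) - xs (j + 1)‖ ≤ ‖x (j + 1) - xs j‖ + ‖xs j - xs (j + 1)‖ := by
      have := norm_sub_le_norm_sub_add_norm_sub (x (j+1)) (xs j) (xs (j+1))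
      simpa using this
    have hdr : ‖xs j - xs (j + 1)‖ ≤ δ := by rw [norm_sub_rev]; exact hdrift j
    have hcontr : ‖x (j + 1) - xs j‖ ≤ L j * ‖x j - xs j‖ := by
      rw [hx j hj]
      nth_rewrite 1 [← hfix j]
      calc ‖P j (x j - lam • f' j (x j)) - P j (xs j - lam • f' j (xs j))‖
          ≤ ‖(x j - lam • f' j (x j)) - (xs j - lam • f' j (xs j))‖ :=
            proj_nonexp (K j) (hK j).2.2 (P j) (hP j) _ _
        _ ≤ max |1 - lam * m j| |1 - lam * Mk j| * ‖x j - xs j‖ :=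
            grad_step_contraction (f j) (f' j) (m j) (Mk j) lam hlam.1
              (hm j).le (hmMk j) (hsc j) (hgrad j) (hlip j) _ _
        _ = L j * ‖x j - xs j‖ := by rw [hL j]
    linarith
  -- induction
  induction k, hk using Nat.le_induction with
  | base =>
    simp
  | succ n hn ih =>
    have hn1 : n - 1 + 1 = n := Nat.succ_pred_eq_of_pos hn
    have hprod : ∏ i ∈ Finset.Icc 1 ((n + 1) - 1), L i
        = (∏ i ∈ Finset.Icc 1 (n - 1), L i) * L n := by
      rw [Nat.add_sub_cancel, ← hn1, Finset.prod_Icc_succ_top (by omega), hn1]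
    have hprodnn : 0 ≤ ∏ i ∈ Finset.Icc 1 (n - 1), L i :=
      Finset.prod_nonneg (fun i _ => hLnn i)
    have hSnn : 0 ≤ δ * (1 - Lbar ^ (n - 1)) / (1 - Lbar) := by
      have : Lbar ^ (n - 1) ≤ 1 := pow_le_one₀ hLbar.1.le hLbar.2.le
      have h2 : 0 ≤ δ * (1 - Lbar ^ (n - 1)) := mul_nonneg hdel (by linarith)
      positivity
    have hstepn := hstep n hn
    have hmul := mul_le_mul_of_nonneg_left ih (hLnn n)
    have hLL := hLle n
    have henn : 0 ≤ ‖x n - xs n‖ := norm_nonneg _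
    have he1nn : 0 ≤ ‖x 1 - xs 1‖ := norm_nonneg _
    have hgeo : Lbar * (δ * (1 - Lbar ^ (n - 1)) / (1 - Lbar)) + δ
        = δ * (1 - Lbar ^ ((n + 1) - 1)) / (1 - Lbar) := by
      rw [Nat.add_sub_cancel, show Lbar ^ n = Lbar ^ (n - 1) * Lbar by rw [← pow_succ, hn1]]
      field_simp
      ring
    have hmono : L n * (δ * (1 - Lbar ^ (n - 1)) / (1 - Lbar))
        ≤ Lbar * (δ * (1 - Lbar ^ (n - 1)) / (1 - Lbar)) :=
      mul_le_mul_of_nonneg_right hLL hSnn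
    have hfin : L n * ‖x n - xs n‖ + δ
        ≤ (∏ i ∈ Finset.Icc 1 ((n + 1) - 1), L i) * ‖x 1 - xs 1‖
          + δ * (1 - Lbar ^ ((n + 1) - 1)) / (1 - Lbar) := by
      rw [hprod, ← hgeo]
      nlinarith [hmul, hmono]
    linarith
end

section
/- [Running forward–backward splitting, residual convergence] Let M > 0 and λ ∈ (0, 2/M). For k = 1, 2, … let f_k : E → ℝ be convex and differentiable with gradient ∇f_k Lipschitz with constant M_k, 0 < M_k ≤ M; let g_k : E → ℝ be convex; and let K_k ⊆ E be nonempty compact convex sets with ‖y‖ ≤ X for every y ∈ K_k and every k. Suppose x*_k ∈ K_k is the minimizer over K_k of y ↦ g_k(y) + (1/(2λ))‖y − (x*_k − λ·∇f_k(x*_k))‖² (fixed point of the forward–backward map) and ‖x*_{k+1} − x*_k‖ ≤ δ. Define the running forward–backward iteration: x_{k+1} ∈ K_k is the minimizer over K_k of y ↦ g_k(y) + (1/(2λ))‖y − (x_k − λ·∇f_k(x_k))‖², starting from x₁ ∈ E. Set a = 1 − λM/2 > 0. Then for every N ≥ 1: (1/N)·Σ_{k=1}^{N} ‖x_{k+1}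 − x_k‖² ≤ (1/(a·N))·‖x₁ − x*₁‖² + (δ/a)·(4X + δ). -/
open scoped RealInnerProductSpace

set_option linter.unusedSectionVars false
set_option maxHeartbeats 1000000

section Helpers

variable {E : Type*} [NormedAddCommGroup E] [InnerProductSpace ℝ E] [CompleteSpace E]

private lemma rfb_line_hasDerivAt (f : E → ℝ) (f' : E → E) (hgrad : ∀ z, HasGradientAt f (f' z) z)
    (x y : E) (t : ℝ) :
    HasDerivAt (fun s : ℝ => f (x + s • (y - x))) ⟪f' (x + t • (y - x)), y - x⟫ t := by
  have hc : HasDerivAt (fun s : ℝ => x + s • (y - x)) (y - x) t := by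
    simpa using ((hasDerivAt_id t).smul_const (y - x)).const_add x
  have hf : HasFDerivAt f (InnerProductSpace.toDual ℝ E (f' (x + t • (y - x)))) (x + t • (y - x)) :=
    hasGradientAt_iff_hasFDerivAt.mp (hgrad _)
  simpa [InnerProductSpace.toDual_apply_apply, Function.comp_def] using hf.comp_hasDerivAt t hc

private lemma rfb_grad_ineq (f : E → ℝ) (f' : E → E) (hconv : ConvexOn ℝ Set.univ f)
    (hgrad : ∀ z, HasGradientAt f (f' z) z) (x y : E) :
    f x + ⟪f' x, y - x⟫ ≤ f y := by
  have hφ : ConvexOn ℝ Set.univ (fun s : ℝ => f (x + s • (y - x))) := by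
    have h := hconv.comp_affineMap (AffineMap.lineMap x y : ℝ →ᵃ[ℝ] E)
    simp only [Set.preimage_univ] at h
    have e : (fun s : ℝ => f (x + s • (y - x))) = f ∘ AffineMap.lineMap x y := by
      funext s
      simp [AffineMap.lineMap_apply, add_comm]
    rw [e]; exact h
  have hd := rfb_line_hasDerivAt f f' hgrad x y 0
  have hs := hφ.le_slope_of_hasDerivAt (Set.mem_univ (0:ℝ)) (Set.mem_univ (1:ℝ)) one_pos
    (by simpa using hd)
  simp [slope_def_field] at hs
  linarith

private lemma rfb_descent (f : E → ℝ) (f' : E → E) (L : ℝ) (hL : 0 ≤ L)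
    (hgrad : ∀ z, HasGradientAt f (f' z) z)
    (hlip : ∀ u v, ‖f' u - f' v‖ ≤ L * ‖u - v‖) (x y : E) :
    f y ≤ f x + ⟪f' x, y - x⟫ + L / 2 * ‖y - x‖ ^ 2 := by
  have hlipC : Continuous f' := by
    have : LipschitzWith (Real.toNNReal L) f' := by
      apply LipschitzWith.of_dist_le_mul
      intro u v
      rw [dist_eq_norm, dist_eq_norm, Real.coe_toNNReal L hL]
      exact hlip u v
    exact this.continuous
  set c : ℝ → E := fun s => x + s • (y - x) with hc
  have hcCont : Continuous c := by fun_prop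
  have hφ' : Continuous fun s : ℝ => ⟪f' (c s), y - x⟫ :=
    (hlipC.comp hcCont).inner continuous_const
  have hFTC : f y - f x = ∫ t in (0:ℝ)..1, ⟪f' (c t), y - x⟫ := by
    have := intervalIntegral.integral_eq_sub_of_hasDerivAt
      (f := fun s : ℝ => f (c s)) (f' := fun s : ℝ => ⟪f' (c s), y - x⟫)
      (a := 0) (b := 1)
      (fun t _ => rfb_line_hasDerivAt f f' hgrad x y t)
      (hφ'.intervalIntegrable 0 1)
    simp only [hc] at this ⊢
    rw [this]
    norm_num
  have hbound : ∫ t in (0:ℝ)..1, ⟪f' (c t), y - x⟫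
      ≤ ∫ t in (0:ℝ)..1, (⟪f' x, y - x⟫ + L * t * ‖y - x‖ ^ 2) := by
    apply intervalIntegral.integral_mono_on (by norm_num)
      (hφ'.intervalIntegrable 0 1)
      (by apply Continuous.intervalIntegrable; fun_prop)
    intro t ht
    have h1 : ⟪f' (c t) - f' x, y - x⟫ ≤ L * t * ‖y - x‖ ^ 2 := by
      calc ⟪f' (c t) - f' x, y - x⟫ ≤ ‖f' (c t) - f' x‖ * ‖y - x‖ :=
            real_inner_le_norm _ _
        _ ≤ (L * ‖c t - x‖) * ‖y - x‖ := by
            apply mul_le_mul_of_nonneg_right (hlip _ _) (norm_nonneg _)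
        _ = L * t * ‖y - x‖ ^ 2 := by
            have : c t - x = t • (y - x) := by simp [hc]
            rw [this, norm_smul, Real.norm_eq_abs, abs_of_nonneg ht.1]
            ring
    have h2 : ⟪f' (c t) - f' x, y - x⟫ = ⟪f' (c t), y - x⟫ - ⟪f' x, y - x⟫ :=
      inner_sub_left _ _ _
    linarith
  have hval : ∫ t in (0:ℝ)..1, (⟪f' x, y - x⟫ + L * t * ‖y - x‖ ^ 2)
      = ⟪f' x, y - x⟫ + L / 2 * ‖y - x‖ ^ 2 := by
    rw [intervalIntegral.integral_add (intervalIntegrable_const)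
      (by apply Continuous.intervalIntegrable; fun_prop)]
    simp only [mul_assoc]
    rw [intervalIntegral.integral_const]
    rw [intervalIntegral.integral_const_mul]
    have : ∫ t in (0:ℝ)..1, t * ‖y - x‖ ^ 2
        = (∫ t in (0:ℝ)..1, t) * ‖y - x‖ ^ 2 := intervalIntegral.integral_mul_const _ _
    rw [this, integral_id]
    norm_num
    ring
  linarith

private lemma rfb_coco (f : E → ℝ) (f' : E → E) (L : ℝ) (hL : 0 < L)
    (hconv : ConvexOn ℝ Set.univ f)
    (hgrad : ∀ z, HasGradientAt f (f' z) z)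
    (hlip : ∀ u v, ‖f' u - f' v‖ ≤ L * ‖u - v‖) (x y : E) :
    ‖f' x - f' y‖ ^ 2 ≤ L * ⟪f' x - f' y, x - y⟫ := by
  have hL' : L ≠ 0 := ne_of_gt hL
  have half : ∀ u v : E, f u + ⟪f' u, v - u⟫ + 1/(2*L) * ‖f' v - f' u‖^2 ≤ f v := by
    intro u v
    set d := f' v - f' u with hd
    set c := 1/L with hc
    have hcL : L * c = 1 := by rw [hc]; field_simp
    set w := v - c • d with hw
    have hA := rfb_grad_ineq f f' hconv hgrad u w
    have hB := rfb_descent f f' L hL.le hgrad hlip v w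
    have e1 : ⟪f' v, w - v⟫ = -(c * ⟪f' v, d⟫) := by
      have h : w - v = -(c • d) := by rw [hw]; abel
      rw [h, inner_neg_right, real_inner_smul_right]
    have e2 : ‖w - v‖^2 = c^2 * ‖d‖^2 := by
      have h : w - v = -(c • d) := by rw [hw]; abel
      rw [h, norm_neg, norm_smul, mul_pow, Real.norm_eq_abs, sq_abs]
    have e3 : ⟪f' u, w - u⟫ = ⟪f' u, v - u⟫ - c * ⟪f' u, d⟫ := by
      have h : w - u = (v - u) - c • d := by rw [hw]; abel
      rw [h, inner_sub_right, real_inner_smul_right]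
    have e4 : ⟪f' v, d⟫ - ⟪f' u, d⟫ = ‖d‖^2 := by
      rw [← inner_sub_left, ← hd, real_inner_self_eq_norm_sq]
    have e4c : c * ⟪f' v, d⟫ - c * ⟪f' u, d⟫ = c * ‖d‖^2 := by
      rw [← mul_sub, e4]
    have e0 : 1/(2*L) * ‖d‖^2 = c/2 * ‖d‖^2 := by rw [hc]; ring
    have e7 : L/2 * (c^2 * ‖d‖^2) = c/2 * ‖d‖^2 := by
      rw [show L/2 * (c^2 * ‖d‖^2) = (L*c) * (c * ‖d‖^2) / 2 by ring, hcL]; ring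
    rw [e1, e2, e7] at hB
    rw [e3] at hA
    rw [e0]
    linarith
  have h1 := half x y
  have h2 := half y x
  have e5 : ‖f' y - f' x‖ = ‖f' x - f' y‖ := norm_sub_rev _ _
  have e6 : ⟪f' x, y - x⟫ + ⟪f' y, x - y⟫ = -⟪f' x - f' y, x - y⟫ := by
    rw [inner_sub_left]
    have h : ⟪f' x, y - x⟫ = -⟪f' x, x - y⟫ := by
      rw [← inner_neg_right]; congr 1; abel
    rw [h]; ring
  rw [e5] at h1
  have key : 1/L * ‖f' x - f' y‖^2 ≤ ⟪f' x - f' y, x - y⟫ := by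
    have e8 : (1:ℝ)/L * ‖f' x - f' y‖^2 = 2 * (1/(2*L) * ‖f' x - f' y‖^2) := by
      field_simp
    rw [e8]
    linarith
  have h9 := mul_le_mul_of_nonneg_left key hL.le
  have e9 : L * (1/L * ‖f' x - f' y‖^2) = ‖f' x - f' y‖^2 := by field_simp
  linarith

private lemma rfb_prox_vi (lam : ℝ) (hlam : 0 < lam) (g : E → ℝ) (hg : ConvexOn ℝ Set.univ g)
    (K : Set E) (hK : Convex ℝ K) (z u : E) (hu : u ∈ K)
    (hmin : ∀ y ∈ K, g u + 1/(2*lam) * ‖u - z‖^2 ≤ g y + 1/(2*lam) * ‖y - z‖^2)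
    (y : E) (hy : y ∈ K) :
    lam * (g u - g y) ≤ ⟪u - z, y - u⟫ := by
  set c : ℝ := 1/(2*lam) with hc
  have hcpos : 0 < c := by rw [hc]; positivity
  have hstep : ∀ t : ℝ, 0 < t → t ≤ 1 →
      0 ≤ (g y - g u) + 2*c*⟪u - z, y - u⟫ + t*c*‖y-u‖^2 := by
    intro t ht0 ht1
    have hmem : (1-t) • u + t • y ∈ K := hK hu hy (by linarith) ht0.le (by ring)
    have hmin' := hmin _ hmem
    have hgc : g ((1-t) • u + t • y) ≤ (1-t) * g u + t * g y :=
      hg.2 (Set.mem_univ u) (Set.mem_univ y) (by linarith) ht0.le (by ring)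
    have hns : ‖((1-t) • u + t • y) - z‖^2
        = ‖u - z‖^2 + 2*t*⟪u - z, y - u⟫ + t^2*‖y - u‖^2 := by
      have h : ((1-t) • u + t • y) - z = (u - z) + t • (y - u) := by
        rw [sub_smul, one_smul, smul_sub]; abel
      rw [h, norm_add_sq_real, real_inner_smul_right, norm_smul, Real.norm_eq_abs,
        abs_of_nonneg ht0.le, mul_pow]
      ring
    rw [hns] at hmin'
    have h2 : 0 ≤ t * ((g y - g u) + 2*c*⟪u - z, y - u⟫ + t*c*‖y-u‖^2) := by
      nlinarith [hmin', hgc]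
    nlinarith [h2, ht0]
  have hA : 0 ≤ (g y - g u) + 2*c*⟪u - z, y - u⟫ := by
    by_contra hA
    push_neg at hA
    set A := (g y - g u) + 2*c*⟪u - z, y - u⟫ with hAdef
    set q := c*‖y-u‖^2 with hq
    have hq0 : 0 ≤ q := by rw [hq]; positivity
    set t := min 1 ((-A)/(q+1)) with htdef
    have ht0 : 0 < t := lt_min one_pos (by apply div_pos (by linarith) (by linarith))
    have ht1 : t ≤ 1 := min_le_left _ _
    have htq : t * (q+1) ≤ -A := by
      have h := min_le_right (1:ℝ) ((-A)/(q+1))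
      calc t * (q+1) ≤ ((-A)/(q+1)) * (q+1) := by
            apply mul_le_mul_of_nonneg_right (htdef ▸ h) (by linarith)
        _ = -A := by field_simp
    have h1 := hstep t ht0 ht1
    have h2 : 0 ≤ A + t*q := by rw [hq]; linarith [h1]
    nlinarith [htq, ht0]
  have e : 2*c*lam = 1 := by rw [hc]; field_simp
  have h3 := mul_le_mul_of_nonneg_left hA hlam.le
  have e2 : lam * (2*c*⟪u - z, y - u⟫) = ⟪u - z, y - u⟫ := by
    rw [show lam * (2*c*⟪u - z, y - u⟫) = (2*c*lam) * ⟪u - z, y - u⟫ by ring, e, one_mul]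
  nlinarith [h3, e2]

private lemma rfb_step_key (M lam : ℝ) (hM : 0 < M) (hl0 : 0 < lam)
    (w p d : E)
    (h1 : ‖w‖^2 ≤ ⟪w, p⟫ - lam * ⟪w, d⟫)
    (h2 : ‖d‖^2 ≤ M * ⟪p, d⟫) :
    ‖w‖^2 + (1 - lam*M/2) * ‖w - p‖^2 ≤ ‖p‖^2 := by
  have eWP : ‖w - p‖^2 = ‖w‖^2 - 2*⟪w, p⟫ + ‖p‖^2 := norm_sub_sq_real w p
  set V : E := M • (w - p) + (2:ℝ) • d with hV
  have eV : ‖V‖^2 = M^2*‖w-p‖^2 + 4*M*(⟪w,d⟫ - ⟪p,d⟫) + 4*‖d‖^2 := by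
    rw [hV, norm_add_sq_real, norm_smul, norm_smul, real_inner_smul_left,
      real_inner_smul_right, inner_sub_left, Real.norm_eq_abs, Real.norm_eq_abs,
      abs_of_pos hM, mul_pow]
    norm_num
    ring
  have t3 : 0 ≤ lam * ‖V‖^2 := by positivity
  have tM : 0 ≤ M * (⟪w, p⟫ - lam * ⟪w, d⟫ - ‖w‖^2) :=
    mul_nonneg hM.le (by linarith)
  have tl : 0 ≤ lam * (M * ⟪p, d⟫ - ‖d‖^2) := mul_nonneg hl0.le (by linarith)
  have hMG : 0 ≤ M * (‖p‖^2 - ‖w‖^2 - (1 - lam*M/2) * ‖w - p‖^2) := by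
    rw [eV] at t3
    rw [eWP] at t3 ⊢
    nlinarith [t3, tM, tl]
  have := le_of_mul_le_mul_left (by linarith : M * 0 ≤ M * (‖p‖^2 - ‖w‖^2 - (1 - lam*M/2) * ‖w - p‖^2)) hM
  linarith

end Helpers
/-- Running forward–backward splitting: mean fixed-point residual convergence. -/
theorem running_forward_backward_residual
    {E : Type*} [NormedAddCommGroup E] [InnerProductSpace ℝ E] [CompleteSpace E]
    (M X δ lam : ℝ) (hM : 0 < M) (hlam : lam ∈ Set.Ioo 0 (2 / M))
    (f : ℕ → E → ℝ) (f' : ℕ → E → E) (Mk : ℕ → ℝ)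
    (hconvf : ∀ k, ConvexOn ℝ Set.univ (f k))
    (hgrad : ∀ k x, HasGradientAt (f k) (f' k x) x)
    (hMk : ∀ k, 0 < Mk k ∧ Mk k ≤ M)
    (hlip : ∀ k x y, ‖f' k x - f' k y‖ ≤ Mk k * ‖x - y‖)
    (g : ℕ → E → ℝ) (hconvg : ∀ k, ConvexOn ℝ Set.univ (g k))
    (K : ℕ → Set E)
    (hK : ∀ k, (K k).Nonempty ∧ IsCompact (K k) ∧ Convex ℝ (K k))
    (hKX : ∀ k, ∀ y ∈ K k, ‖y‖ ≤ X)
    (xs : ℕ → E)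
    (hfix : ∀ k, xs k ∈ K k ∧
      ∀ y ∈ K k, g k (xs k) + 1 / (2 * lam) * ‖xs k - (xs k - lam • f' k (xs k))‖ ^ 2
        ≤ g k y + 1 / (2 * lam) * ‖y - (xs k - lam • f' k (xs k))‖ ^ 2)
    (hdrift : ∀ k, ‖xs (k + 1) - xs k‖ ≤ δ)
    (x : ℕ → E)
    (hx : ∀ k ≥ 1, x (k + 1) ∈ K k ∧
      ∀ y ∈ K k, g k (x (k + 1)) + 1 / (2 * lam) * ‖x (k + 1) - (x k - lam • f' k (x k))‖ ^ 2
        ≤ g k y + 1 / (2 * lam) * ‖y - (x k - lam • f' k (x k))‖ ^ 2)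
    (a : ℝ) (ha : a = 1 - lam * M / 2)
    (N : ℕ) (hN : 1 ≤ N) :
    (1 / (N : ℝ)) * ∑ k ∈ Finset.Icc 1 N, ‖x (k + 1) - x k‖ ^ 2
      ≤ (1 / (a * N)) * ‖x 1 - xs 1‖ ^ 2 + (δ / a) * (4 * X + δ) := by
  obtain ⟨hl0, hl2⟩ := hlam
  have hlM : lam * M < 2 := by
    have := (lt_div_iff₀ hM).mp hl2
    linarith
  have hapos : 0 < a := by rw [ha]; linarith
  have hδ0 : 0 ≤ δ := le_trans (norm_nonneg _) (hdrift 0)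
  -- per-step inequality
  have step : ∀ k : ℕ, 1 ≤ k →
      ‖x (k+1) - xs (k+1)‖^2 + a * ‖x (k+1) - x k‖^2
        ≤ ‖x k - xs k‖^2 + δ * (4*X + δ) := by
    intro k hk
    set u := x (k+1) with hu
    set v := xs k with hv
    set w := u - v with hw
    set p := x k - v with hp
    set d := f' k (x k) - f' k v with hd
    have huK : u ∈ K k := (hx k hk).1
    have hvK : v ∈ K k := (hfix k).1
    -- firm nonexpansiveness: h1
    have vi1 := rfb_prox_vi lam hl0 (g k) (hconvg k) (K k) (hK k).2.2
      (x k - lam • f' k (x k)) u huK (fun y hy => (hx k hk).2 y hy) v hvK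
    have vi2 := rfb_prox_vi lam hl0 (g k) (hconvg k) (K k) (hK k).2.2
      (v - lam • f' k v) v hvK (fun y hy => (hfix k).2 y hy) u huK
    have hcancel : lam * (g k u - g k v) + lam * (g k v - g k u) = 0 := by ring
    have hsum0 : 0 ≤ ⟪u - (x k - lam • f' k (x k)), v - u⟫
        + ⟪v - (v - lam • f' k v), u - v⟫ := by linarith [vi1, vi2, hcancel]
    have hid : ⟪u - (x k - lam • f' k (x k)), v - u⟫
        + ⟪v - (v - lam • f' k v), u - v⟫
        = ⟪w, p⟫ - lam * ⟪w, d⟫ - ‖w‖^2 := by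
      have hAB : (u - (x k - lam • f' k (x k))) - (v - (v - lam • f' k v))
          = (w - p) + lam • d := by
        rw [hw, hp, hd, smul_sub]; abel
      have huv : u - v = -(v - u) := by abel
      calc ⟪u - (x k - lam • f' k (x k)), v - u⟫ + ⟪v - (v - lam • f' k v), u - v⟫
          = ⟪(u - (x k - lam • f' k (x k))) - (v - (v - lam • f' k v)), v - u⟫ := by
            simp only [inner_sub_left, huv, inner_neg_right]; ring
        _ = ⟪(w - p) + lam • d, v - u⟫ := by rw [hAB]
        _ = ⟪w, p⟫ - lam * ⟪w, d⟫ - ‖w‖^2 := by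
            have hvu : v - u = -w := by rw [hw]; abel
            rw [hvu, inner_neg_right, inner_add_left, inner_sub_left,
              real_inner_smul_left, real_inner_comm p w, real_inner_comm d w,
              real_inner_self_eq_norm_sq]
            ring
    have h1 : ‖w‖^2 ≤ ⟪w, p⟫ - lam * ⟪w, d⟫ := by
      rw [hid] at hsum0; linarith
    -- cocoercivity: h2
    have hcc := rfb_coco (f k) (f' k) (Mk k) (hMk k).1 (hconvf k) (hgrad k)
      (hlip k) (x k) v
    have hdp0 : 0 ≤ ⟪d, p⟫ := by
      by_contra hneg
      push_neg at hneg
      have : Mk k * ⟪f' k (x k) - f' k v, x k - v⟫ < 0 :=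
        mul_neg_of_pos_of_neg (hMk k).1 (by rw [hd, hp] at hneg; exact hneg)
      nlinarith [hcc, sq_nonneg ‖f' k (x k) - f' k v‖]
    have h2 : ‖d‖^2 ≤ M * ⟪p, d⟫ := by
      have hMle : Mk k * ⟪d, p⟫ ≤ M * ⟪d, p⟫ :=
        mul_le_mul_of_nonneg_right (hMk k).2 hdp0
      rw [real_inner_comm d p]
      calc ‖d‖^2 = ‖f' k (x k) - f' k v‖^2 := by rw [hd]
        _ ≤ Mk k * ⟪f' k (x k) - f' k v, x k - v⟫ := hcc
        _ = Mk k * ⟪d, p⟫ := by rw [hd, hp]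
        _ ≤ M * ⟪d, p⟫ := hMle
    have hkey := rfb_step_key M lam hM hl0 w p d h1 h2
    have hwp : w - p = x (k+1) - x k := by rw [hw, hp]; abel
    rw [hwp, ← ha] at hkey
    -- drift step
    have hw2X : ‖w‖ ≤ 2*X := by
      calc ‖w‖ ≤ ‖u‖ + ‖v‖ := norm_sub_le _ _
        _ ≤ 2*X := by linarith [hKX k u huK, hKX k v hvK]
    have htri : ‖x (k+1) - xs (k+1)‖ ≤ ‖w‖ + δ := by
      calc ‖x (k+1) - xs (k+1)‖ ≤ ‖x (k+1) - xs k‖ + ‖xs k - xs (k+1)‖ :=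
            norm_sub_le_norm_sub_add_norm_sub _ _ _
        _ ≤ ‖w‖ + δ := by
            rw [norm_sub_rev (xs k)]
            exact add_le_add (le_of_eq (by rw [hw, hu, hv])) (hdrift k)
    have hsq : ‖x (k+1) - xs (k+1)‖^2 ≤ ‖w‖^2 + δ * (4*X + δ) := by
      nlinarith [htri, hw2X, hδ0, norm_nonneg (x (k+1) - xs (k+1)), norm_nonneg w]
    linarith [hkey, hsq]
  -- summation by induction
  have hsum : ∀ n : ℕ, 1 ≤ n →
      ‖x (n+1) - xs (n+1)‖^2 + a * ∑ k ∈ Finset.Icc 1 n, ‖x (k+1) - x k‖^2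
        ≤ ‖x 1 - xs 1‖^2 + (n : ℝ) * (δ * (4*X + δ)) := by
    intro n hn
    induction n, hn using Nat.le_induction with
    | base =>
      rw [Finset.Icc_self, Finset.sum_singleton]
      push_cast
      linarith [step 1 le_rfl]
    | succ n hn ih =>
      rw [Finset.sum_Icc_succ_top (by omega : 1 ≤ n+1)]
      have hst := step (n+1) (by omega)
      push_cast
      push_cast at ih
      linarith [hst, ih]
  have key : a * ∑ k ∈ Finset.Icc 1 N, ‖x (k+1) - x k‖^2
      ≤ ‖x 1 - xs 1‖^2 + (N : ℝ) * (δ * (4*X + δ)) := by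
    have h := hsum N hN
    nlinarith [h, sq_nonneg ‖x (N+1) - xs (N+1)‖]
  have hNpos : (0:ℝ) < N := by exact_mod_cast Nat.lt_of_lt_of_le Nat.zero_lt_one hN
  have hc : 0 < 1/(a*(N:ℝ)) := by positivity
  have hmul := mul_le_mul_of_nonneg_left key hc.le
  have eL : (1/(a*(N:ℝ))) * (a * ∑ k ∈ Finset.Icc 1 N, ‖x (k+1) - x k‖^2)
      = (1/(N:ℝ)) * ∑ k ∈ Finset.Icc 1 N, ‖x (k+1) - x k‖^2 := by
    field_simp
  have eR : (1/(a*(N:ℝ))) * (‖x 1 - xs 1‖^2 + (N:ℝ) * (δ * (4*X + δ)))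
      = (1/(a*(N:ℝ))) * ‖x 1 - xs 1‖^2 + (δ/a) * (4*X + δ) := by
    field_simp
  rw [eL, eR] at hmul
  exact hmul
end
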